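/- Let P ⊂ P• ⊂ ℝ² be bounded open sets with Lipschitz (piecewise linear) boundaries such that ∂P• ⊂ ∂P, and let η > 0. Fix u ∈ H¹(P•) and let v be its restriction to P. If the Rayleigh quotients R_{P•,−η}(u) = (∫_{P•}|∇u|² − η∫_{∂P•} u² dℋ¹)/∫_{P•} u² and R_{P,−η}(v) are both negative, then R_{P•,−η}(u) ≥ R_{P,−η}(v). -/
import Mathlib


open MeasureTheory Bornology

/-- The Robin Rayleigh quotient in the plane with boundary parameter `β`. -/
noncomputable def rayleigh (Ω : Set (EuclideanSpace ℝ (Fin 2))) (β : ℝ)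
    (u : EuclideanSpace ℝ (Fin 2) → ℝ) : ℝ :=
  ((∫ x in Ω, ‖fderiv ℝ u x‖ ^ 2) + β * ∫ x in frontier Ω, (u x) ^ 2 ∂(μH[(1 : ℝ)])) /
    ∫ x in Ω, (u x) ^ 2

/-- Filling holes and fractures does not decrease a negative Rayleigh quotient:
if `P ⊆ P•`, `∂P• ⊆ ∂P`, and both quotients are negative, then
`R_{P•,-η}(u) ≥ R_{P,-η}(u)`. -/
theorem negative_rayleigh_monotone_under_filling
    (η : ℝ) (hη : 0 < η)
    (P Pb : Set (EuclideanSpace ℝ (Fin 2)))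
    (hPopen : IsOpen P) (hPbopen : IsOpen Pb) (hPbbdd : IsBounded Pb)
    (hsub : P ⊆ Pb) (hfr : frontier Pb ⊆ frontier P)
    (u : EuclideanSpace ℝ (Fin 2) → ℝ)
    (hint1 : IntegrableOn (fun x => ‖fderiv ℝ u x‖ ^ 2) Pb volume)
    (hint2 : IntegrableOn (fun x => (u x) ^ 2) Pb volume)
    (hint3 : IntegrableOn (fun x => (u x) ^ 2) (frontier P) (μH[(1 : ℝ)]))
    (hpos : 0 < ∫ x in P, (u x) ^ 2)
    (hneg1 : rayleigh Pb (-η) u < 0) (hneg2 : rayleigh P (-η) u < 0) :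
    rayleigh P (-η) u ≤ rayleigh Pb (-η) u := by
  set A1 : ℝ := (∫ x in P, ‖fderiv ℝ u x‖ ^ 2) + (-η) * ∫ x in frontier P, (u x) ^ 2 ∂(μH[(1:ℝ)]) with hA1
  set A2 : ℝ := (∫ x in Pb, ‖fderiv ℝ u x‖ ^ 2) + (-η) * ∫ x in frontier Pb, (u x) ^ 2 ∂(μH[(1:ℝ)]) with hA2
  set B1 : ℝ := ∫ x in P, (u x) ^ 2 with hB1
  set B2 : ℝ := ∫ x in Pb, (u x) ^ 2 with hB2
  have hB : B1 ≤ B2 := by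
    apply setIntegral_mono_set hint2
    · filter_upwards with x using sq_nonneg _
    · exact Filter.Eventually.of_forall hsub
  have hB2pos : 0 < B2 := lt_of_lt_of_le hpos hB
  have hgrad : (∫ x in P, ‖fderiv ℝ u x‖ ^ 2) ≤ ∫ x in Pb, ‖fderiv ℝ u x‖ ^ 2 := by
    apply setIntegral_mono_set hint1
    · filter_upwards with x using sq_nonneg _
    · exact Filter.Eventually.of_forall hsub
  have hbdry : (∫ x in frontier Pb, (u x) ^ 2 ∂(μH[(1:ℝ)])) ≤
      ∫ x in frontier P, (u x) ^ 2 ∂(μH[(1:ℝ)]) := by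
    apply setIntegral_mono_set hint3
    · filter_upwards with x using sq_nonneg _
    · exact Filter.Eventually.of_forall hfr
  have hA : A1 ≤ A2 := by
    have : (-η) * (∫ x in frontier P, (u x) ^ 2 ∂(μH[(1:ℝ)])) ≤
        (-η) * ∫ x in frontier Pb, (u x) ^ 2 ∂(μH[(1:ℝ)]) := by
      apply mul_le_mul_of_nonpos_left hbdry (by linarith)
    linarith
  have hA1neg : A1 < 0 := by
    have h2 : rayleigh P (-η) u = A1 / B1 := rfl
    rw [h2, div_neg_iff] at hneg2
    rcases hneg2 with ⟨_, h⟩ | ⟨h, _⟩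
    · linarith
    · exact h
  have key1 : A1 / B1 ≤ A1 / B2 := by
    rw [div_le_div_iff₀ hpos hB2pos]; nlinarith
  have key2 : A1 / B2 ≤ A2 / B2 := by gcongr
  exact key1.trans key2
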